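/- Let T_{α,r} denote the self-adjoint operator f ↦ −f'' in L²(0,r) with domain {f ∈ H²(0,r) : f'(0) = −α f(0), f(r) = 0}, generated by the closed form t_{α,r}(f,f) = ∫₀^r |f'(t)|² dt − α|f(0)|² on {f ∈ H¹(0,r) : f(r) = 0}. If rα → +∞, then T_{α,r} has a unique negative eigenvalue, and E₁(T_{α,r}) = −α² + O(α² e^{−rα}) as rα → +∞. Furthermore, if ψ is an associated L²-normalized eigenfunction, then |ψ(0)|² = 2α + O(α e^{−rα}) as rα → +∞. -/

import Mathlib

open MeasureTheory Set Filter Topology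

noncomputable section

/-- Courant–Fischer min–max value of index `n` (the `n`-th eigenvalue, `n ≥ 1`, counted
with multiplicities) of the quadratic form `q` defined on the form core `dom`, relative
to the squared-`L²`-norm form `N`, inside an ambient real vector space `H`. -/
def minmaxE {H : Type*} [AddCommGroup H] [Module ℝ H]
    (dom : Set H) (N q : H → ℝ) (n : ℕ) : ℝ :=
  sInf {E : ℝ | ∃ V : Submodule ℝ H, (V : Set H) ⊆ dom ∧ Module.finrank ℝ ↥V = n ∧
    (∀ u ∈ V, N u = 0 → u = 0) ∧ ∀ u ∈ V, q u ≤ E * N u}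

/-- Form core for `T_{α,r}` on `(0,r)` (Dirichlet at `r`). -/
def domRD (r : ℝ) : Set (ℝ → ℝ) := {f | ContDiff ℝ 1 f ∧ ∀ t, r ≤ t → f t = 0}

/-- Squared `L²(0,r)`-norm. -/
def NI (r : ℝ) (f : ℝ → ℝ) : ℝ := ∫ t in (0:ℝ)..r, (f t) ^ 2

/-- The form `t_{α,r}(f) = ∫₀^r |f'|² - α |f(0)|²` of the Robin–Dirichlet operator `T_{α,r}`. -/
def tForm (α r : ℝ) (f : ℝ → ℝ) : ℝ := (∫ t in (0:ℝ)..r, (deriv f t) ^ 2) - α * (f 0) ^ 2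

/-- `E_n(T_{α,r})`, the `n`-th min-max eigenvalue of `T_{α,r}`. -/
def ET1 (α r : ℝ) (n : ℕ) : ℝ := minmaxE (domRD r) (NI r) (tForm α r) n

end

/-!
Completing the square gives `t_{α,r}(u) + α² ‖u‖² = ∫₀^r |u' + α u|²` when `u(r) = 0`, so
`E₁ ≥ -α²`. The half-line Robin ground state `e^{-αt}`, corrected to vanish to first order at
`r`, makes this integral `O(α⁴ r³ e^{-2rα})` while its squared norm stays `≥ 1/(32α)`, whence
`E₁ ≤ -α² + O(α² e^{-rα})`. The Robin term is a rank-one perturbation of a nonnegative form,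
so `E₂ ≥ 0`. For an eigenfunction, testing the equation against `ψ` and integrating the
conserved energy `ψ'² + E ψ²` give `ψ(0)² (α - r (E + α²)) = -2E`, which pins `ψ(0)²` to `2α`
up to `O(r (E + α²))`.
-/

open Real

section MinMax

variable {H : Type*} [AddCommGroup H] [Module ℝ H] {dom : Set H} {N q : H → ℝ}

/-- `minmaxE dom N q n` is `sInf (minmaxLevels dom N q n)` by definition. -/
def minmaxLevels (dom : Set H) (N q : H → ℝ) (n : ℕ) : Set ℝ :=
  {E : ℝ | ∃ V : Submodule ℝ H, (V : Set H) ⊆ dom ∧ Module.finrank ℝ ↥V = n ∧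
    (∀ u ∈ V, N u = 0 → u = 0) ∧ ∀ u ∈ V, q u ≤ E * N u}

/-- An `n`-dimensional trial space meets the kernel of any map of rank `< n` nontrivially. -/
theorem le_of_mem_minmaxLevels {F : Type*} [AddCommGroup F] [Module ℝ F] [FiniteDimensional ℝ F]
    {n : ℕ} {c E : ℝ} (ℓ : H →ₗ[ℝ] F) (hℓ : Module.finrank ℝ F < n)
    (hN : ∀ u ∈ dom, 0 ≤ N u) (hq : ∀ u ∈ dom, ℓ u = 0 → c * N u ≤ q u)
    (hE : E ∈ minmaxLevels dom N q n) : c ≤ E := by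
  obtain ⟨V, hVdom, hVrank, hVN, hVq⟩ := hE
  have : FiniteDimensional ℝ V := Module.finite_of_finrank_pos (by omega)
  obtain ⟨w, hw, hw0⟩ := Submodule.exists_mem_ne_zero_of_ne_bot
    (LinearMap.ker_ne_bot_of_finrank_lt (f := ℓ ∘ₗ V.subtype) (by omega))
  have hu0 : (w : H) ≠ 0 := fun h => hw0 (Subtype.ext h)
  have hu := hVdom w.2
  have hNpos : 0 < N w := (hN _ hu).lt_of_ne fun h => hu0 (hVN _ w.2 h.symm)
  exact le_of_mul_le_mul_right ((hq _ hu hw).trans (hVq _ w.2)) hNpos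

theorem rayleigh_mem_minmaxLevels_one {f : H} (hdom : ∀ c : ℝ, c • f ∈ dom)
    (hNsmul : ∀ c : ℝ, N (c • f) = c ^ 2 * N f) (hqsmul : ∀ c : ℝ, q (c • f) = c ^ 2 * q f)
    (hf : 0 < N f) : q f / N f ∈ minmaxLevels dom N q 1 := by
  have hN0 : N 0 = 0 := by simpa using hNsmul 0
  have hf0 : f ≠ 0 := by
    rintro rfl
    exact hf.ne' hN0
  refine ⟨ℝ ∙ f, ?_, finrank_span_singleton hf0, ?_, ?_⟩
  · intro u hu
    obtain ⟨c, rfl⟩ := Submodule.mem_span_singleton.mp hu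
    exact hdom c
  · intro u hu hc
    obtain ⟨c, rfl⟩ := Submodule.mem_span_singleton.mp hu
    rw [hNsmul, mul_eq_zero, pow_eq_zero_iff two_ne_zero] at hc
    rw [hc.resolve_right hf.ne', zero_smul]
  · intro u hu
    obtain ⟨c, rfl⟩ := Submodule.mem_span_singleton.mp hu
    rw [hNsmul, hqsmul, div_mul_eq_mul_div, mul_left_comm, mul_div_assoc,
      mul_div_cancel_right₀ _ hf.ne']

theorem le_minmaxE {F : Type*} [AddCommGroup F] [Module ℝ F] [FiniteDimensional ℝ F]
    {n : ℕ} {c : ℝ} (ℓ : H →ₗ[ℝ] F) (hℓ : Module.finrank ℝ F < n)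
    (hN : ∀ u ∈ dom, 0 ≤ N u) (hq : ∀ u ∈ dom, ℓ u = 0 → c * N u ≤ q u)
    (hne : (minmaxLevels dom N q n).Nonempty) : c ≤ minmaxE dom N q n :=
  le_csInf hne fun _ hE => le_of_mem_minmaxLevels ℓ hℓ hN hq hE

theorem minmaxE_nonneg {F : Type*} [AddCommGroup F] [Module ℝ F] [FiniteDimensional ℝ F]
    {n : ℕ} (ℓ : H →ₗ[ℝ] F) (hℓ : Module.finrank ℝ F < n)
    (hN : ∀ u ∈ dom, 0 ≤ N u) (hq : ∀ u ∈ dom, ℓ u = 0 → 0 ≤ q u) :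
    0 ≤ minmaxE dom N q n :=
  Real.sInf_nonneg fun _ hE =>
    le_of_mem_minmaxLevels ℓ hℓ hN (fun u hu hℓu => by simpa using hq u hu hℓu) hE

end MinMax

section RobinForm

variable {α r : ℝ}

theorem NI_nonneg (hr : 0 ≤ r) (u : ℝ → ℝ) : 0 ≤ NI r u :=
  intervalIntegral.integral_nonneg hr fun _ _ => sq_nonneg _

theorem NI_smul (r c : ℝ) (u : ℝ → ℝ) : NI r (c • u) = c ^ 2 * NI r u := by
  simp only [NI, Pi.smul_apply, smul_eq_mul, mul_pow, intervalIntegral.integral_const_mul]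

theorem tForm_smul (α r c : ℝ) (u : ℝ → ℝ) : tForm α r (c • u) = c ^ 2 * tForm α r u := by
  simp only [tForm, deriv_const_smul_field, Pi.smul_apply, smul_eq_mul, mul_pow,
    intervalIntegral.integral_const_mul]
  ring

theorem smul_mem_domRD {u : ℝ → ℝ} (hu : u ∈ domRD r) (c : ℝ) : c • u ∈ domRD r :=
  ⟨hu.1.const_smul c, fun t ht => by simp [hu.2 t ht]⟩

/-- Completing the square: `(u' + α u)² = u'² + α² u² + α (u²)'`, and `u²` vanishes at `r`. -/
theorem tForm_add_sq_mul_NI {u : ℝ → ℝ} (hu : ContDiff ℝ 1 u) (hur : u r = 0) :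
    tForm α r u + α ^ 2 * NI r u = ∫ t in (0:ℝ)..r, (deriv u t + α * u t) ^ 2 := by
  have hud : Differentiable ℝ u := hu.differentiable one_ne_zero
  have hu'c : Continuous (deriv u) := hu.continuous_deriv le_rfl
  have hcross : Continuous fun t => 2 * α * u t * deriv u t := by fun_prop
  have hboundary : ∫ t in (0:ℝ)..r, 2 * α * u t * deriv u t = -(α * u 0 ^ 2) := by
    rw [intervalIntegral.integral_eq_sub_of_hasDerivAt (f := fun t => α * u t ^ 2)
      (fun t _ => by simpa [mul_comm, mul_left_comm, mul_assoc] using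
        ((hud t).hasDerivAt.pow 2).const_mul α) (hcross.intervalIntegrable _ _)]
    simp [hur]
  have hexpand : ∀ t, (deriv u t + α * u t) ^ 2
      = (deriv u t ^ 2 + α ^ 2 * u t ^ 2) + 2 * α * u t * deriv u t := fun t => by ring
  have hsq : Continuous fun t => deriv u t ^ 2 := by fun_prop
  have hsq' : Continuous fun t => α ^ 2 * u t ^ 2 := by fun_prop
  simp_rw [hexpand]
  rw [intervalIntegral.integral_add ((hsq.fun_add hsq').intervalIntegrable _ _)
      (hcross.intervalIntegrable _ _),
    intervalIntegral.integral_add (hsq.intervalIntegrable _ _) (hsq'.intervalIntegrable _ _),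
    intervalIntegral.integral_const_mul, hboundary, tForm, NI]
  ring

theorem neg_sq_mul_NI_le_tForm (hr : 0 ≤ r) {u : ℝ → ℝ} (hu : u ∈ domRD r) :
    -α ^ 2 * NI r u ≤ tForm α r u := by
  have hsq := tForm_add_sq_mul_NI (α := α) hu.1 (hu.2 r le_rfl)
  have := intervalIntegral.integral_nonneg (μ := volume) hr fun t _ =>
    sq_nonneg (deriv u t + α * u t)
  linarith

theorem tForm_nonneg_of_apply_zero (hr : 0 ≤ r) {u : ℝ → ℝ} (hu0 : u 0 = 0) :
    0 ≤ tForm α r u := by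
  rw [tForm, hu0]
  simpa using intervalIntegral.integral_nonneg hr fun t _ => sq_nonneg (deriv u t)

/-- The Robin term only sees `u ↦ u 0`, a rank-one perturbation of a nonnegative form. -/
theorem ET1_two_nonneg (hr : 0 ≤ r) : 0 ≤ ET1 α r 2 :=
  minmaxE_nonneg (LinearMap.proj 0) (by simp)
    (fun u _ => NI_nonneg hr u) fun _ _ hu0 => tForm_nonneg_of_apply_zero hr hu0

end RobinForm

theorem hasDerivAt_ite_le_zero {g g' : ℝ → ℝ} {r : ℝ} (hg : ∀ t, HasDerivAt g (g' t) t)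
    (hgr : g r = 0) (hg'r : g' r = 0) (t : ℝ) :
    HasDerivAt (fun s => if s ≤ r then g s else 0) (if t ≤ r then g' t else 0) t := by
  rcases lt_trichotomy t r with h | rfl | h
  · rw [if_pos h.le]
    exact (hg t).congr_of_eventuallyEq <|
      eventually_of_mem (Iio_mem_nhds h) fun s hs => if_pos hs.le
  · rw [if_pos le_rfl, hg'r, ← hasDerivWithinAt_univ, ← Iic_union_Ici]
    refine HasDerivWithinAt.union ?_ ?_
    · exact (hg'r ▸ (hg t).hasDerivWithinAt).congr (fun s hs => if_pos hs) (if_pos le_rfl)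
    · refine (hasDerivWithinAt_const t _ 0).congr (fun s hs => ?_) (by simp [hgr])
      split_ifs with hst
      · rw [le_antisymm hst hs, hgr]
      · rfl
  · rw [if_neg h.not_ge]
    exact (hasDerivAt_const t 0).congr_of_eventuallyEq <|
      eventually_of_mem (Ioi_mem_nhds h) fun s hs => if_neg (not_le.mpr hs)

/-- The half-line Robin ground state `e^{-αt}`, corrected by an affine function so that it
vanishes to first order at `r`. -/
noncomputable def robinTrial (α r t : ℝ) : ℝ :=
  if t ≤ r then exp (-(α * t)) - exp (-(r * α)) * (1 + α * (r - t)) else 0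

section RobinTrial

variable {α r : ℝ}

theorem hasDerivAt_robinTrial (t : ℝ) :
    HasDerivAt (robinTrial α r)
      (if t ≤ r then α * (exp (-(r * α)) - exp (-(α * t))) else 0) t := by
  have hg : ∀ s, HasDerivAt (fun s => exp (-(α * s)) - exp (-(r * α)) * (1 + α * (r - s)))
      (α * (exp (-(r * α)) - exp (-(α * s)))) s := fun s => by
    have hexp : HasDerivAt (fun s => -(α * s)) (-α) s := by
      simpa using ((hasDerivAt_id' s).const_mul α).fun_neg
    have haff : HasDerivAt (fun s => 1 + α * (r - s)) (-α) s := by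
      simpa using (((hasDerivAt_id' s).const_sub r).const_mul α).const_add 1
    exact (hexp.exp.fun_sub (haff.const_mul (exp (-(r * α))))).congr_deriv (by ring)
  exact hasDerivAt_ite_le_zero hg (by rw [mul_comm α r]; ring) (by rw [mul_comm α r]; ring) t

theorem deriv_robinTrial :
    deriv (robinTrial α r) =
      fun t => if t ≤ r then α * (exp (-(r * α)) - exp (-(α * t))) else 0 :=
  funext fun t => (hasDerivAt_robinTrial t).deriv

theorem robinTrial_mem_domRD : robinTrial α r ∈ domRD r := by
  refine ⟨contDiff_one_iff_deriv.mpr ⟨fun t => (hasDerivAt_robinTrial t).differentiableAt, ?_⟩,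
    fun t ht => ?_⟩
  · rw [deriv_robinTrial]
    exact Continuous.if_le (by fun_prop) continuous_const continuous_id continuous_const
      fun t ht => by simp [ht, mul_comm]
  · unfold robinTrial
    split_ifs with htr
    · rw [le_antisymm htr ht]; ring_nf
    · rfl

theorem deriv_robinTrial_add_mul {t : ℝ} (ht : t ≤ r) :
    deriv (robinTrial α r) t + α * robinTrial α r t = -(α ^ 2 * exp (-(r * α)) * (r - t)) := by
  rw [deriv_robinTrial]
  simp only [robinTrial, if_pos ht]
  ring

theorem tForm_robinTrial_add (hr : 0 ≤ r) :
    tForm α r (robinTrial α r) + α ^ 2 * NI r (robinTrial α r)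
      = α ^ 4 * exp (-(r * α)) ^ 2 * r ^ 3 / 3 := by
  rw [tForm_add_sq_mul_NI robinTrial_mem_domRD.1 (robinTrial_mem_domRD.2 r le_rfl),
    intervalIntegral.integral_congr (g := fun t => α ^ 4 * exp (-(r * α)) ^ 2 * (r - t) ^ 2)
      fun t ht => by
        rw [deriv_robinTrial_add_mul (uIcc_of_le hr ▸ ht).2]
        ring,
    intervalIntegral.integral_const_mul, intervalIntegral.integral_comp_sub_left fun t => t ^ 2]
  simp
  ring

theorem one_div_le_NI_robinTrial (hα : 0 < α) (hX : 1 ≤ 2 * (r * α))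
    (hε : (1 + r * α) * exp (-(r * α)) ≤ 1 / 4) : 1 / (32 * α) ≤ NI r (robinTrial α r) := by
  set s := 1 / (2 * α)
  have hs : 0 ≤ s := by positivity
  have hsr : s ≤ r := by
    rw [div_le_iff₀ (by positivity)]
    linarith
  have hquarter : ∀ t ∈ Icc 0 s, 1 / 4 ≤ robinTrial α r t := by
    rintro t ⟨ht0, hts⟩
    have hαt : α * t ≤ 1 / 2 := by
      rw [le_div_iff₀ (by positivity)] at hts
      linarith
    have hexp := add_one_le_exp (-(α * t))
    have hcorr : exp (-(r * α)) * (1 + α * (r - t)) ≤ exp (-(r * α)) * (1 + r * α) :=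
      mul_le_mul_of_nonneg_left (by nlinarith) (exp_pos _).le
    rw [robinTrial, if_pos (hts.trans hsr)]
    linarith
  have hcont : Continuous fun t => robinTrial α r t ^ 2 :=
    (robinTrial_mem_domRD.1.continuous).pow 2
  calc 1 / (32 * α) = ∫ _ in (0:ℝ)..s, (1 / 4 : ℝ) ^ 2 := by
        simp only [intervalIntegral.integral_const, s, sub_zero, smul_eq_mul]
        ring
    _ ≤ ∫ t in (0:ℝ)..s, robinTrial α r t ^ 2 :=
        intervalIntegral.integral_mono_on hs intervalIntegrable_const
          (hcont.intervalIntegrable _ _) fun t ht => pow_le_pow_left₀ (by norm_num)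
            (hquarter t ht) 2
    _ ≤ NI r (robinTrial α r) :=
        intervalIntegral.integral_mono_interval le_rfl hs hsr
          (Eventually.of_forall fun t => sq_nonneg _) (hcont.intervalIntegrable _ _)

end RobinTrial

theorem ET1_one_bounds {α r : ℝ} (hα : 0 < α) (hX : 1 ≤ 2 * (r * α))
    (hε : (1 + r * α) * exp (-(r * α)) ≤ 1 / 4) :
    -α ^ 2 ≤ ET1 α r 1 ∧
      ET1 α r 1 + α ^ 2 ≤ 32 / 3 * (r * α) ^ 3 * α ^ 2 * exp (-(r * α)) ^ 2 := by
  have hr : 0 ≤ r := nonneg_of_mul_nonneg_left (by linarith) hα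
  set f := robinTrial α r
  have hNf : 1 / (32 * α) ≤ NI r f := one_div_le_NI_robinTrial hα hX hε
  have hNpos : 0 < NI r f := lt_of_lt_of_le (by positivity) hNf
  have hkey : tForm α r f + α ^ 2 * NI r f = α ^ 4 * exp (-(r * α)) ^ 2 * r ^ 3 / 3 :=
    tForm_robinTrial_add hr
  have hmem : tForm α r f / NI r f ∈ minmaxLevels (domRD r) (NI r) (tForm α r) 1 :=
    rayleigh_mem_minmaxLevels_one (smul_mem_domRD robinTrial_mem_domRD) (fun c => NI_smul r c f)
      (fun c => tForm_smul α r c f) hNpos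
  have hN : ∀ u ∈ domRD r, 0 ≤ NI r u := fun u _ => NI_nonneg hr u
  -- `E₁` is unconstrained: take the zero map into a zero-dimensional space.
  have hrank : Module.finrank ℝ PUnit < 1 := by simp [Module.finrank_zero_of_subsingleton]
  have hlow : ∀ u ∈ domRD r, (0 : (ℝ → ℝ) →ₗ[ℝ] PUnit) u = 0 → -α ^ 2 * NI r u ≤ tForm α r u :=
    fun u hu _ => neg_sq_mul_NI_le_tForm hr hu
  refine ⟨le_minmaxE 0 hrank hN hlow ⟨_, hmem⟩, ?_⟩
  have hup : ET1 α r 1 ≤ tForm α r f / NI r f :=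
    csInf_le ⟨_, fun _ hE => le_of_mem_minmaxLevels 0 hrank hN hlow hE⟩ hmem
  calc ET1 α r 1 + α ^ 2 ≤ tForm α r f / NI r f + α ^ 2 := by linarith
    _ = α ^ 4 * exp (-(r * α)) ^ 2 * r ^ 3 / 3 / NI r f := by
        rw [← hkey]
        field_simp
    _ ≤ α ^ 4 * exp (-(r * α)) ^ 2 * r ^ 3 / 3 / (1 / (32 * α)) := by gcongr
    _ = 32 / 3 * (r * α) ^ 3 * α ^ 2 * exp (-(r * α)) ^ 2 := by
        field_simp

section Eigenfunction

variable {ψ : ℝ → ℝ} {α E r : ℝ}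

theorem integral_deriv_sq_of_hasDerivAt_deriv (hr : 0 ≤ r) (hψ : ContDiff ℝ 1 ψ)
    (hode : ∀ t ∈ Ioo 0 r, HasDerivAt (deriv ψ) (-(E * ψ t)) t) :
    ∫ t in (0:ℝ)..r, deriv ψ t ^ 2
      = ψ r * deriv ψ r - ψ 0 * deriv ψ 0 + E * ∫ t in (0:ℝ)..r, ψ t ^ 2 := by
  have hψd : Differentiable ℝ ψ := hψ.differentiable one_ne_zero
  have hψ'c : Continuous (deriv ψ) := hψ.continuous_deriv le_rfl
  have hforce : Continuous fun t => -(E * ψ t) := by fun_prop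
  have hibp := intervalIntegral.integral_mul_deriv_eq_deriv_mul_of_hasDerivAt
    hψd.continuous.continuousOn hψ'c.continuousOn (fun t _ => (hψd t).hasDerivAt)
    (by simpa [hr] using hode) (hψ'c.intervalIntegrable _ _) (hforce.intervalIntegrable 0 r)
  have hpot : ∫ t in (0:ℝ)..r, ψ t * -(E * ψ t) = -(E * ∫ t in (0:ℝ)..r, ψ t ^ 2) := by
    rw [← intervalIntegral.integral_const_mul, ← intervalIntegral.integral_neg]
    congr 1 with t
    ring
  simp only [hpot, ← sq] at hibp
  linarith

theorem deriv_sq_add_mul_sq_eq (hψ : ContDiff ℝ 1 ψ)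
    (hode : ∀ t ∈ Ioo 0 r, HasDerivAt (deriv ψ) (-(E * ψ t)) t) {x : ℝ} (hx : x ∈ Icc 0 r) :
    deriv ψ x ^ 2 + E * ψ x ^ 2 = deriv ψ 0 ^ 2 + E * ψ 0 ^ 2 := by
  have hψd : Differentiable ℝ ψ := hψ.differentiable one_ne_zero
  have hψ'c : Continuous (deriv ψ) := hψ.continuous_deriv le_rfl
  have hzero := intervalIntegral.integral_eq_sub_of_hasDerivAt_of_le hx.1
    (f := fun t => deriv ψ t ^ 2 + E * ψ t ^ 2) (f' := fun _ => 0)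
    ((hψ'c.fun_pow 2).add (continuous_const.mul (hψd.continuous.fun_pow 2))).continuousOn
    (fun t ht => by
      have := ((hode t ⟨ht.1, ht.2.trans_le hx.2⟩).pow 2).add
        (((hψd t).hasDerivAt.pow 2).const_mul E)
      exact this.congr_deriv (by simp; ring))
    intervalIntegrable_const
  simp only [intervalIntegral.integral_zero] at hzero
  linarith

theorem integral_deriv_sq_add_mul_sq (hr : 0 ≤ r) (hψ : ContDiff ℝ 1 ψ)
    (hode : ∀ t ∈ Ioo 0 r, HasDerivAt (deriv ψ) (-(E * ψ t)) t) :
    (∫ t in (0:ℝ)..r, deriv ψ t ^ 2) + E * ∫ t in (0:ℝ)..r, ψ t ^ 2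
      = r * (deriv ψ 0 ^ 2 + E * ψ 0 ^ 2) := by
  have hψ'c : Continuous (deriv ψ) := hψ.continuous_deriv le_rfl
  have hkin : Continuous fun t => deriv ψ t ^ 2 := by fun_prop
  have hpot : Continuous fun t => E * ψ t ^ 2 := by fun_prop
  rw [← intervalIntegral.integral_const_mul, ← intervalIntegral.integral_add
      (hkin.intervalIntegrable _ _) (hpot.intervalIntegrable _ _),
    intervalIntegral.integral_congr (g := fun _ => deriv ψ 0 ^ 2 + E * ψ 0 ^ 2)
      fun t ht => deriv_sq_add_mul_sq_eq hψ hode (uIcc_of_le hr ▸ ht)]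
  simp
  ring

/-- Integrating the equation against `ψ` and integrating the conserved energy give two
expressions for `∫ ψ'²`; equating them leaves only boundary values. -/
theorem sq_apply_zero_mul_eq (hr : 0 ≤ r) (hψ : ContDiff ℝ 1 ψ)
    (hode : ∀ t ∈ Ioo 0 r, HasDerivAt (deriv ψ) (-(E * ψ t)) t) (hψr : ψ r = 0)
    (hψ0 : deriv ψ 0 = -α * ψ 0) (hN : NI r ψ = 1) :
    ψ 0 ^ 2 * (α - r * (E + α ^ 2)) = -2 * E := by
  have h1 := integral_deriv_sq_of_hasDerivAt_deriv hr hψ hode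
  have h2 := integral_deriv_sq_add_mul_sq hr hψ hode
  rw [NI] at hN
  rw [hN, hψr, hψ0] at h1
  rw [hN, hψ0] at h2
  linear_combination h2 - h1

theorem hasDerivAt_deriv_of_iteratedDeriv_two (hψ : ContDiff ℝ 2 ψ) {t : ℝ}
    (ht : -(iteratedDeriv 2 ψ t) = E * ψ t) : HasDerivAt (deriv ψ) (-(E * ψ t)) t := by
  have hd : Differentiable ℝ (deriv ψ) := by
    simpa using hψ.differentiable_iteratedDeriv 1 (by norm_num)
  rw [← ht, neg_neg, iteratedDeriv_succ, iteratedDeriv_one]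
  exact (hd t).hasDerivAt

theorem abs_sq_apply_zero_sub_le (hα : 0 < α) (hψ : ContDiff ℝ 2 ψ) (hψr : ψ r = 0)
    (hψ0 : deriv ψ 0 = -α * ψ 0) (hode : ∀ t ∈ Ioo 0 r, -(iteratedDeriv 2 ψ t) = E * ψ t)
    (hN : NI r ψ = 1) (hX : 1 ≤ r * α) (he : 0 ≤ E + α ^ 2) (hre : 2 * r * (E + α ^ 2) ≤ α) :
    |ψ 0 ^ 2 - 2 * α| ≤ 4 * r * (E + α ^ 2) := by
  have hr : 0 ≤ r := nonneg_of_mul_nonneg_left (by linarith) hα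
  have hid := sq_apply_zero_mul_eq hr (hψ.of_le (by norm_num))
    (fun t ht => hasDerivAt_deriv_of_iteratedDeriv_two hψ (hode t ht)) hψr hψ0 hN
  set e := E + α ^ 2
  have hkey : (ψ 0 ^ 2 - 2 * α) * (α - r * e) = 2 * e * (r * α - 1) := by
    linear_combination hid
  have hD : α / 2 ≤ α - r * e := by linarith
  have hnonneg : 0 ≤ ψ 0 ^ 2 - 2 * α :=
    nonneg_of_mul_nonneg_left (by rw [hkey]; exact mul_nonneg (by positivity) (by linarith))
      (by linarith)
  have hbound : (ψ 0 ^ 2 - 2 * α) * α ≤ (4 * r * e) * α := by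
    nlinarith [mul_le_mul_of_nonneg_left hD hnonneg]
  rw [abs_of_nonneg hnonneg]
  exact le_of_mul_le_mul_right hbound hα

end Eigenfunction

theorem pow_four_mul_exp_neg_le {x : ℝ} (hx : 0 ≤ x) : x ^ 4 * exp (-x) ≤ 24 := by
  have h : x ^ 4 ≤ 24 * exp x := by
    have := pow_div_factorial_le_exp x hx 4
    norm_num [Nat.factorial] at this
    linarith
  calc x ^ 4 * exp (-x) ≤ 24 * exp x * exp (-x) := by gcongr
    _ = 24 := by rw [mul_assoc, ← exp_add, add_neg_cancel, exp_zero, mul_one]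

/-- If `rα → +∞`, then `T_{α,r}` has a unique negative eigenvalue,
`E₁(T_{α,r}) = -α² + O(α² e^{-rα})`, and every associated `L²`-normalized eigenfunction `ψ`
satisfies `|ψ(0)|² = 2α + O(α e^{-rα})`. -/
theorem robin_interval_first_eigenvalue_asymptotics :
    ∃ C M : ℝ, 0 < C ∧ 0 < M ∧ ∀ α r : ℝ, 0 < α → 0 < r → M ≤ r * α →
      (ET1 α r 1 < 0 ∧ 0 ≤ ET1 α r 2) ∧
      |ET1 α r 1 + α ^ 2| ≤ C * α ^ 2 * Real.exp (-(r * α)) ∧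
      ∀ ψ : ℝ → ℝ, ContDiff ℝ 2 ψ → ψ r = 0 → deriv ψ 0 = -α * ψ 0 →
        (∀ t ∈ Set.Ioo (0:ℝ) r, -(iteratedDeriv 2 ψ t) = ET1 α r 1 * ψ t) →
        NI r ψ = 1 →
        |(ψ 0) ^ 2 - 2 * α| ≤ C * α * Real.exp (-(r * α)) := by
  refine ⟨1024, 100, by norm_num, by norm_num, fun α r hα hr hX => ?_⟩
  set κ := exp (-(r * α))
  have hκ0 : 0 < κ := exp_pos _
  have hκ : (r * α) ^ 4 * κ ≤ 24 := pow_four_mul_exp_neg_le (by positivity)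
  have hXκ : r * α * κ ≤ 1 / 1000 := by
    nlinarith [pow_le_pow_left₀ (by norm_num) hX 3]
  obtain ⟨hlow, hup⟩ := ET1_one_bounds (r := r) hα (by linarith) (by nlinarith)
  set e := ET1 α r 1 + α ^ 2
  have hre : r * e ≤ 256 * α * κ :=
    calc r * e ≤ r * (32 / 3 * (r * α) ^ 3 * α ^ 2 * κ ^ 2) := by gcongr
      _ = 32 / 3 * ((r * α) ^ 4 * κ) * (α * κ) := by ring
      _ ≤ 32 / 3 * 24 * (α * κ) := by gcongr
      _ = 256 * α * κ := by ring
  have he : e ≤ 3 * α ^ 2 * κ := by nlinarith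
  refine ⟨⟨by nlinarith, ET1_two_nonneg hr.le⟩, ?_, fun ψ hψ hψr hψ0 hode hN => ?_⟩
  · rw [abs_of_nonneg (by linarith)]
    nlinarith
  · calc |ψ 0 ^ 2 - 2 * α| ≤ 4 * r * e :=
        abs_sq_apply_zero_sub_le hα hψ hψr hψ0 hode hN (by linarith) (by linarith) (by nlinarith)
      _ ≤ 1024 * α * κ := by linarith
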